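/- arXiv:2306.06062 — 2 statements merged into one kernel-verified Lean document; each statement's English description precedes it below -/
import Mathlib

section
/- The map ε ↦ JS(p, p + ε·v), for a strictly positive probability mass function p on a finite set and a perturbation v with ∑_x v(x) = 0, has vanishing value and vanishing first derivative at ε = 0, and its second derivative at ε = 0 equals (1/4) ∑_x v(x)²/p(x). -/
/-!
Coordinatewise, with `m = (a + b)/2`, the summand `(a log (a/m) + b log (b/m))/2` has
`∂_b = log (b/m) / 2`: the terms coming from `∂_b m = 1/2` add up to `-(a + b)/(4m) = -1/2`,
which cancels the `+1/2` from `∂_b (b log b)`.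
This vanishes at `b = a`, and `∂_b (log (b/m) / 2) = a / (2b(a + b))` equals `1/(4a)` there;
along `b = a + εw` the chain rule contributes the factor `w` twice.
-/

open scoped BigOperators

/-- Kullback–Leibler divergence. -/
noncomputable def KLdiv {X : Type*} [Fintype X] (u v : X → ℝ) : ℝ :=
  ∑ x, u x * Real.log (u x / v x)

/-- Jensen–Shannon divergence. -/
noncomputable def JSdiv {X : Type*} [Fintype X] (p q : X → ℝ) : ℝ :=
  (1 / 2) * KLdiv p (fun x => (p x + q x) / 2) +
  (1 / 2) * KLdiv q (fun x => (p x + q x) / 2)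

open Real Filter Topology

noncomputable def jsTerm (a b : ℝ) : ℝ :=
  (a * log (a / ((a + b) / 2)) + b * log (b / ((a + b) / 2))) / 2

theorem JSdiv_eq_sum_jsTerm {X : Type*} [Fintype X] (p q : X → ℝ) :
    JSdiv p q = ∑ x, jsTerm (p x) (q x) := by
  simp only [JSdiv, KLdiv, jsTerm, Finset.mul_sum, ← Finset.sum_add_distrib]
  exact Finset.sum_congr rfl fun x _ => by ring

theorem jsTerm_self (a : ℝ) : jsTerm a a = 0 := by
  simp [jsTerm]

theorem hasDerivAt_log_div_midpoint {a b : ℝ} (ha : 0 < a) (hb : 0 < b) :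
    HasDerivAt (fun t => log (t / ((a + t) / 2)) / 2) (a / (2 * b * (a + b))) b := by
  have hM : HasDerivAt (fun t => (a + t) / 2) (1 / 2) b :=
    ((hasDerivAt_id b).const_add a).div_const 2
  have hlog := ((hasDerivAt_id' b).fun_div hM (by positivity)).log (by positivity)
  refine (hlog.div_const 2).congr_deriv ?_
  field_simp
  ring

theorem hasDerivAt_jsTerm_right {a b : ℝ} (ha : 0 < a) (hb : 0 < b) :
    HasDerivAt (jsTerm a) (log (b / ((a + b) / 2)) / 2) b := by
  have hM : HasDerivAt (fun t => (a + t) / 2) (1 / 2) b :=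
    ((hasDerivAt_id b).const_add a).div_const 2
  have hlogA := ((hasDerivAt_const b a).fun_div hM (by positivity)).log (by positivity)
  have hlogB := ((hasDerivAt_id' b).fun_div hM (by positivity)).log (by positivity)
  refine (((hlogA.const_mul a).add ((hasDerivAt_id' b).mul hlogB)).div_const 2).congr_deriv ?_
  field_simp
  ring

theorem HasDerivAt.comp_line {f : ℝ → ℝ} {f' a w ε : ℝ}
    (hf : HasDerivAt f f' (a + ε * w)) :
    HasDerivAt (fun t => f (a + t * w)) (w * f') ε := by
  have hline : HasDerivAt (fun t : ℝ => a + t * w) w ε := by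
    simpa using ((hasDerivAt_id ε).mul_const w).const_add a
  exact (mul_comm f' w) ▸ hf.comp ε hline

theorem eventually_forall_pos_add_mul {X : Type*} [Finite X] {p : X → ℝ} (hp : ∀ x, 0 < p x)
    (v : X → ℝ) : ∀ᶠ ε : ℝ in 𝓝 0, ∀ x, 0 < p x + ε * v x := by
  refine eventually_all.2 fun x => ?_
  have hc : ContinuousAt (fun ε : ℝ => p x + ε * v x) 0 := by fun_prop
  exact hc.eventually (eventually_gt_nhds (by simpa using hp x))

theorem js_derivatives_at_zero_general {X : Type*} [Fintype X] (p v : X → ℝ)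
    (hp_pos : ∀ x, 0 < p x) :
    (fun ε : ℝ => JSdiv p (fun x => p x + ε * v x)) 0 = 0 ∧
    deriv (fun ε : ℝ => JSdiv p (fun x => p x + ε * v x)) 0 = 0 ∧
    deriv (deriv (fun ε : ℝ => JSdiv p (fun x => p x + ε * v x))) 0
      = (1 / 4) * ∑ x, v x ^ 2 / p x := by
  simp only [JSdiv_eq_sum_jsTerm]
  set L : ℝ → ℝ := fun ε => ∑ x, v x * (log ((p x + ε * v x) /
    ((p x + (p x + ε * v x)) / 2)) / 2)
  have hderiv : deriv (fun ε : ℝ => ∑ x, jsTerm (p x) (p x + ε * v x)) =ᶠ[𝓝 0] L := by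
    filter_upwards [eventually_forall_pos_add_mul hp_pos v] with ε hε
    exact (HasDerivAt.fun_sum fun x _ =>
      (hasDerivAt_jsTerm_right (hp_pos x) (hε x)).comp_line).deriv
  have hL : HasDerivAt L (∑ x, v x * (v x * (p x / (2 * p x * (p x + p x))))) 0 := by
    refine HasDerivAt.fun_sum fun x _ => HasDerivAt.const_mul (v x)
      (HasDerivAt.comp_line (f := fun t => log (t / ((p x + t) / 2)) / 2) ?_)
    simpa using hasDerivAt_log_div_midpoint (hp_pos x) (hp_pos x)
  refine ⟨by simp [jsTerm_self], ?_, ?_⟩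
  · rw [hderiv.eq_of_nhds]
    simp [L, div_self (hp_pos _).ne']
  · rw [hderiv.deriv_eq, hL.deriv, Finset.mul_sum]
    refine Finset.sum_congr rfl fun x _ => ?_
    have := (hp_pos x).ne'
    field_simp
    ring

/-- The map `ε ↦ JS(p, p + ε·v)` vanishes to first order at `ε = 0`, and its second
derivative there equals `(1/4) ∑_x v(x)²/p(x)`. -/
theorem js_derivatives_at_zero {X : Type*} [Fintype X] (p v : X → ℝ)
    (hp_pos : ∀ x, 0 < p x) (hp_sum : ∑ x, p x = 1) (hv : ∑ x, v x = 0) :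
    (fun ε : ℝ => JSdiv p (fun x => p x + ε * v x)) 0 = 0 ∧
    deriv (fun ε : ℝ => JSdiv p (fun x => p x + ε * v x)) 0 = 0 ∧
    deriv (deriv (fun ε : ℝ => JSdiv p (fun x => p x + ε * v x))) 0
      = (1 / 4) * ∑ x, v x ^ 2 / p x :=
  js_derivatives_at_zero_general p v hp_pos
end

section
/- Let p and q be strictly positive probability mass functions on a finite set X parameterized smoothly by x ∈ ℝᵈ (i.e., smooth maps into the interior of the simplex). If for all x and all sufficiently small Δx one has the exact second-order agreement JS(p(x), p(x+Δx)) = JS(q(x), q(x+Δx)) + o(‖Δx‖²), then the Fisher information matrices agree: I_p(x) = I_q(x) for all x. -/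
open Asymptotics Filter
open scoped BigOperators

/-- Fisher information matrix of a smooth family of strictly positive pmfs. -/
noncomputable def fisherInfo {d : ℕ} {X : Type*} [Fintype X]
    (r : (Fin d → ℝ) → X → ℝ) (x : Fin d → ℝ) (i j : Fin d) : ℝ :=
  ∑ k, (fderiv ℝ (fun y => r y k) x (Pi.single i 1)) *
        (fderiv ℝ (fun y => r y k) x (Pi.single j 1)) / r x k

/-- Taylor–Young at order 2 in one dimension. -/
lemma taylorYoung (h h' : ℝ → ℝ) (L : ℝ)
    (hd : ∀ s, HasDerivAt h (h' s) s) (hd0 : HasDerivAt h' L 0)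
    (h0 : h 0 = 0) (h'0 : h' 0 = 0) :
    (fun t => h t - L / 2 * t ^ 2) =o[nhds 0] fun t => t ^ 2 := by
  have hk' : (fun s => h' s - L * s) =o[nhds (0:ℝ)] fun s => s := by
    have := hasDerivAt_iff_isLittleO.mp hd0
    simp only [h'0, sub_zero, smul_eq_mul] at this
    simpa [mul_comm] using this
  rw [isLittleO_iff]
  intro ε hε
  rw [isLittleO_iff] at hk'
  have hev := hk' (half_pos hε)
  obtain ⟨δ, hδpos, hδ⟩ := Metric.eventually_nhds_iff.mp hev
  rw [Metric.eventually_nhds_iff]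
  refine ⟨δ, hδpos, fun t ht => ?_⟩
  have hK : ∀ s ∈ Set.uIcc 0 t,
      HasDerivWithinAt (fun s => h s - L / 2 * s ^ 2) (h' s - L * s) (Set.uIcc 0 t) s := by
    intro s _
    have : HasDerivAt (fun s : ℝ => h s - L / 2 * s ^ 2) (h' s - L * s) s := by
      have h2 : HasDerivAt (fun s : ℝ => L / 2 * s ^ 2) (L / 2 * (2 * s ^ 1)) s :=
        (hasDerivAt_pow 2 s).const_mul (L / 2)
      have := (hd s).sub h2
      exact this.congr_deriv (by ring)
    exact this.hasDerivWithinAt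
  have bound : ∀ s ∈ Set.uIcc 0 t, ‖h' s - L * s‖ ≤ ε / 2 * |t| := by
    intro s hs
    have hst : |s| ≤ |t| := by
      rcases Set.mem_uIcc.mp hs with ⟨h1, h2⟩ | ⟨h1, h2⟩
      · rw [abs_of_nonneg h1]; exact h2.trans (le_abs_self t)
      · rw [abs_of_nonpos h2]
        calc -s ≤ -t := by linarith
          _ ≤ |t| := neg_le_abs t
    have hsδ : dist s 0 < δ := by
      rw [Real.dist_eq, sub_zero]
      calc |s| ≤ |t| := hst
        _ < δ := by simpa [Real.dist_eq] using ht
    have := hδ hsδ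
    calc ‖h' s - L * s‖ ≤ ε / 2 * ‖s‖ := this
      _ ≤ ε / 2 * |t| := by
          apply mul_le_mul_of_nonneg_left _ (by linarith)
          simpa using hst
  have hmvt := (convex_uIcc (0:ℝ) t).norm_image_sub_le_of_norm_hasDerivWithin_le hK bound
    Set.left_mem_uIcc Set.right_mem_uIcc
  simp only [h0, sub_zero, mul_zero, ne_eq] at hmvt
  calc ‖h t - L / 2 * t ^ 2‖ ≤ ε / 2 * |t| * ‖t‖ := by simpa using hmvt
    _ ≤ ε * ‖t ^ 2‖ := by
        rw [Real.norm_eq_abs, Real.norm_eq_abs, abs_pow, pow_two]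
        nlinarith [mul_nonneg (abs_nonneg t) (abs_nonneg t), hε]

lemma const_sq_isLittleO {C : ℝ}
    (h : (fun t : ℝ => C * t ^ 2) =o[nhds 0] fun t => t ^ 2) : C = 0 := by
  by_contra hC
  rw [isLittleO_iff] at h
  have h2 := h (half_pos (abs_pos.mpr hC))
  have h3 : ∀ᶠ t : ℝ in nhdsWithin 0 {(0:ℝ)}ᶜ, ‖C * t ^ 2‖ ≤ |C| / 2 * ‖t ^ 2‖ :=
    h2.filter_mono nhdsWithin_le_nhds
  obtain ⟨t, ht, htne⟩ := (h3.and eventually_mem_nhdsWithin).exists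
  have ht2 : (0:ℝ) < |t ^ 2| := by
    have : t ≠ 0 := htne
    positivity
  rw [Real.norm_eq_abs, Real.norm_eq_abs, abs_mul] at ht
  nlinarith [abs_pos.mpr hC]

lemma JSkey {d : ℕ} {X : Type*} [Fintype X]
    (r : (Fin d → ℝ) → X → ℝ) (hr : ∀ k, ContDiff ℝ (⊤ : ℕ∞) (fun x => r x k))
    (hpos : ∀ x k, 0 < r x k) (x u : Fin d → ℝ) :
    (fun t : ℝ => JSdiv (r x) (r (x + t • u)) -
      (∑ k, (fderiv ℝ (fun y => r y k) x u) ^ 2 / r x k) / 8 * t ^ 2)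
      =o[nhds 0] fun t => t ^ 2 := by
  classical
  set a : X → ℝ := r x with ha
  set c : X → ℝ → ℝ := fun k t => r (x + t • u) k with hcdef
  set c' : X → ℝ → ℝ := fun k s => fderiv ℝ (fun y => r y k) (x + s • u) u with hc'def
  have hline : ∀ s : ℝ, HasDerivAt (fun t : ℝ => x + t • u) u s := by
    intro s
    simpa using ((hasDerivAt_id s).smul_const u).const_add x
  have hc : ∀ k s, HasDerivAt (c k) (c' k s) s := by
    intro k s
    exact (((hr k).differentiable (by simp) (x + s • u)).hasFDerivAt).comp_hasDerivAt s (hline s)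
  have hcpos : ∀ k s, 0 < c k s := fun k s => hpos _ k
  have hapos : ∀ k, 0 < a k := fun k => hpos x k
  have hc0 : ∀ k, c k 0 = a k := by intro k; simp [hcdef, ha]
  have hlinecd : ContDiff ℝ (⊤ : ℕ∞) (fun t : ℝ => x + t • u) :=
    contDiff_const.add (contDiff_id.smul contDiff_const)
  have hc' : ∀ k, DifferentiableAt ℝ (c' k) 0 := by
    intro k
    have h1 : ContDiff ℝ (⊤ : ℕ∞) (fderiv ℝ (fun z => r z k)) := (hr k).fderiv_right (by simp)
    have h2 : ContDiff ℝ (⊤ : ℕ∞) (fun y => fderiv ℝ (fun z => r z k) y u) :=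
      h1.clm_apply contDiff_const
    exact ((h2.comp hlinecd).differentiable (by simp)) 0
  set E : X → ℝ := fun k => deriv (c' k) 0 with hEdef
  have hE : ∀ k, HasDerivAt (c' k) (E k) 0 := fun k => (hc' k).hasDerivAt
  set D : X → ℝ := fun k => fderiv ℝ (fun y => r y k) x u with hDdef
  have hD : ∀ k, c' k 0 = D k := by intro k; simp [hc'def, hDdef]
  set S : X → ℝ → ℝ := fun k t => 1 / 2 *
    (a k * (Real.log (a k) - Real.log ((a k + c k t) / 2)) +
      c k t * (Real.log (c k t) - Real.log ((a k + c k t) / 2))) with hSdef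
  have hφeq : ∀ t : ℝ, JSdiv (r x) (r (x + t • u)) = ∑ k, S k t := by
    intro t
    unfold JSdiv KLdiv
    rw [Finset.mul_sum, Finset.mul_sum, ← Finset.sum_add_distrib]
    refine Finset.sum_congr rfl fun k _ => ?_
    have h1 : (0:ℝ) < r x k := hpos x k
    have h2 : (0:ℝ) < r (x + t • u) k := hpos _ k
    have h3 : (0:ℝ) < (r x k + r (x + t • u) k) / 2 := by positivity
    rw [Real.log_div h1.ne' h3.ne', Real.log_div h2.ne' h3.ne']
    simp only [hSdef, ha, hcdef]
    ring
  set ψ : X → ℝ → ℝ := fun k s =>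
    1 / 2 * (Real.log (c k s) - Real.log ((a k + c k s) / 2)) * c' k s with hψdef
  have hmpos : ∀ k s, (0:ℝ) < (a k + c k s) / 2 := by
    intro k s; have := hapos k; have := hcpos k s; positivity
  have hL1 : ∀ k s, HasDerivAt (fun t => Real.log (c k t)) (c' k s / c k s) s := by
    intro k s
    have := (Real.hasDerivAt_log (hcpos k s).ne').comp s (hc k s)
    simpa [Function.comp_def, div_eq_inv_mul] using this
  have hL2 : ∀ k s, HasDerivAt (fun t => Real.log ((a k + c k t) / 2))
      ((c' k s / 2) / ((a k + c k s) / 2)) s := by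
    intro k s
    have := (Real.hasDerivAt_log (hmpos k s).ne').comp s
      (((hc k s).const_add (a k)).div_const 2)
    simpa [Function.comp_def, div_eq_inv_mul] using this
  have hS : ∀ k s, HasDerivAt (S k) (ψ k s) s := by
    intro k s
    have hraw := ((((hasDerivAt_const s (Real.log (a k))).sub (hL2 k s)).const_mul (a k)).add
      ((hc k s).mul ((hL1 k s).sub (hL2 k s)))).const_mul (1 / 2 : ℝ)
    refine hraw.congr_deriv ?_
    simp only [Pi.sub_apply, hψdef]
    have h1 : c k s ≠ 0 := (hcpos k s).ne'
    have h2 : a k + c k s ≠ 0 := by have := hapos k; have := hcpos k s; positivity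
    field_simp
    ring
  have hψ0 : ∀ k, ψ k 0 = 0 := by
    intro k
    simp [hψdef, hc0 k, add_self_div_two]
  have hS0 : ∀ k, S k 0 = 0 := by
    intro k
    simp [hSdef, hc0 k, add_self_div_two]
  have hsum1 : ∀ s, HasDerivAt (fun t => ∑ k, S k t) (∑ k, ψ k s) s :=
    fun s => HasDerivAt.fun_sum fun k _ => hS k s
  have hsum2 : HasDerivAt (fun s => ∑ k, ψ k s) (∑ k, D k ^ 2 / (4 * a k)) 0 := by
    refine HasDerivAt.fun_sum fun k _ => ?_
    have hraw := ((((hL1 k 0).sub (hL2 k 0)).const_mul (1 / 2 : ℝ)).mul (hE k))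
    refine hraw.congr_deriv ?_
    simp only [Pi.sub_apply]
    rw [hc0 k, hD k, add_self_div_two, sub_self]
    have ha0 : a k ≠ 0 := (hapos k).ne'
    field_simp
    try ring
  have hTY := taylorYoung (fun t => ∑ k, S k t) (fun s => ∑ k, ψ k s)
    (∑ k, D k ^ 2 / (4 * a k)) hsum1 hsum2
    (Finset.sum_eq_zero fun k _ => hS0 k) (Finset.sum_eq_zero fun k _ => hψ0 k)
  have hcoef : (∑ k, D k ^ 2 / (4 * a k)) / 2 = (∑ k, D k ^ 2 / a k) / 8 := by
    rw [div_eq_div_iff (by norm_num) (by norm_num)]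
    rw [Finset.sum_mul, Finset.sum_mul]
    refine Finset.sum_congr rfl fun k _ => ?_
    have ha0 : a k ≠ 0 := (hapos k).ne'
    field_simp
    try ring
  refine hTY.congr' ?_ (by rfl)
  filter_upwards with t
  rw [hφeq t, hcoef]

/-- If two smooth families of strictly positive pmfs have Jensen–Shannon
divergences agreeing to second order at every point, then their Fisher
information matrices coincide (Proposition 3.2 of the paper). -/
theorem js_agreement_implies_equal_FIM {d : ℕ} {X : Type*} [Fintype X]
    (p q : (Fin d → ℝ) → X → ℝ)
    (hp : ∀ k, ContDiff ℝ (⊤ : ℕ∞) (fun x => p x k)) (hq : ∀ k, ContDiff ℝ (⊤ : ℕ∞) (fun x => q x k))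
    (hp_pos : ∀ x k, 0 < p x k) (hq_pos : ∀ x k, 0 < q x k)
    (hp_sum : ∀ x, ∑ k, p x k = 1) (hq_sum : ∀ x, ∑ k, q x k = 1)
    (hJS : ∀ x : Fin d → ℝ,
      (fun Δ : Fin d → ℝ => JSdiv (p x) (p (x + Δ)) - JSdiv (q x) (q (x + Δ)))
        =o[nhds (0 : Fin d → ℝ)] fun Δ => ‖Δ‖ ^ 2) :
    ∀ x i j, fisherInfo p x i j = fisherInfo q x i j := by
  intro x i j
  have hQ : ∀ u : Fin d → ℝ,
      ∑ k, (fderiv ℝ (fun y => p y k) x u) ^ 2 / p x k =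
        ∑ k, (fderiv ℝ (fun y => q y k) x u) ^ 2 / q x k := by
    intro u
    have hkp := JSkey p hp hp_pos x u
    have hkq := JSkey q hq hq_pos x u
    have hline : Tendsto (fun t : ℝ => t • u) (nhds 0) (nhds (0 : Fin d → ℝ)) := by
      have hcont : Continuous fun t : ℝ => t • u := continuous_id.smul continuous_const
      simpa using hcont.tendsto 0
    have hA := (hJS x).comp_tendsto hline
    have hA' : (fun t : ℝ => JSdiv (p x) (p (x + t • u)) - JSdiv (q x) (q (x + t • u)))
        =o[nhds 0] fun t : ℝ => t ^ 2 := by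
      refine hA.trans_isBigO ?_
      have heq : ((fun Δ : Fin d → ℝ => ‖Δ‖ ^ 2) ∘ fun t : ℝ => t • u) =
          fun t : ℝ => ‖u‖ ^ 2 * t ^ 2 := by
        funext t
        simp only [Function.comp_apply]
        rw [norm_smul, mul_pow, Real.norm_eq_abs, sq_abs]
        ring
      rw [heq]
      exact (isBigO_refl (fun t : ℝ => t ^ 2) (nhds 0)).const_mul_left _
    have hcomb := (hA'.sub hkp).add hkq
    have hfin : (fun t : ℝ =>
        ((∑ k, (fderiv ℝ (fun y => p y k) x u) ^ 2 / p x k) / 8 -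
          (∑ k, (fderiv ℝ (fun y => q y k) x u) ^ 2 / q x k) / 8) * t ^ 2)
        =o[nhds 0] fun t : ℝ => t ^ 2 := by
      refine hcomb.congr' ?_ (by rfl)
      filter_upwards with t
      ring
    have h0 := const_sq_isLittleO hfin
    linarith
  have expand : ∀ r : (Fin d → ℝ) → X → ℝ,
      ∑ k, (fderiv ℝ (fun y => r y k) x (Pi.single i 1 + Pi.single j 1)) ^ 2 / r x k =
        ∑ k, (fderiv ℝ (fun y => r y k) x (Pi.single i 1)) ^ 2 / r x k +
        ∑ k, (fderiv ℝ (fun y => r y k) x (Pi.single j 1)) ^ 2 / r x k +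
        2 * fisherInfo r x i j := by
    intro r
    unfold fisherInfo
    rw [Finset.mul_sum, ← Finset.sum_add_distrib, ← Finset.sum_add_distrib]
    refine Finset.sum_congr rfl fun k _ => ?_
    rw [map_add]
    ring
  have h3 := hQ (Pi.single i 1 + Pi.single j 1)
  rw [expand p, expand q, hQ (Pi.single i 1), hQ (Pi.single j 1)] at h3
  linarith
end
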